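/- arXiv:2006.04100 — 2 statements merged into one kernel-verified Lean document; each statement's English description precedes it below -/
import Mathlib

section
/- Assume additionally that E satisfies property N(2). Let u and v be vertices of the same color (σ u = σ v) such that v is reachable from u by a directed walk of positive length (Relation.TransGen E u v). Then N(v) ⊆ N(u) and N⁻(u) ⊆ N⁻(v). -/
/-!
By N(2), the two middle vertices of a path `u → a → b → c` can be skipped. Since the colouring
records the parity of a walk's length, induction along a walk from `u` shows that every vertex
of the other colour reachable from `u` is an out-neighbour of `u`, and every vertex `v` of the
same colour is reached by a path `u → b → v` of length two. N(2) applied to `x → u → b → v` and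
to `u → b → v → x` then gives both inclusions.
-/

section

variable {V : Type*} {E : V → V → Prop} {σ : V → Bool}

theorem Bool.eq_of_ne_of_ne {a b c : Bool} (hab : a ≠ b) (hcb : c ≠ b) : a = c := by
  rw [← Bool.eq_not_iff] at hab hcb
  rw [hab, hcb]

theorem Relation.TransGen.shortcut_of_bitransitive (hbip : ∀ u v, E u v → σ u ≠ σ v)
    (hN2 : ∀ u a b c, E u a → E a b → E b c → E u c) {u w : V} (h : TransGen E u w) :
    (σ u ≠ σ w → E u w) ∧ (σ u = σ w → ∃ b, E u b ∧ E b w) := by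
  induction h with
  | single huw => exact ⟨fun _ => huw, fun hc => absurd hc (hbip _ _ huw)⟩
  | @tail b w _ hbw ih =>
    by_cases hub : σ u = σ b
    · obtain ⟨a, hua, hab⟩ := ih.2 hub
      exact ⟨fun _ => hN2 u a b w hua hab hbw,
        fun huw => absurd (hub ▸ huw) (hbip _ _ hbw)⟩
    · exact ⟨fun huw => absurd (Bool.eq_of_ne_of_ne hub (hbip _ _ hbw).symm) huw,
        fun _ => ⟨b, ih.1 hub, hbw⟩⟩

end

theorem stmt_18_general {V : Type*} (E : V → V → Prop)
    (σ : V → Bool) (hbip : ∀ u v, E u v → σ u ≠ σ v)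
    (hN2 : ∀ u a b c, E u a → E a b → E b c → E u c)
    (u v : V) (hcol : σ u = σ v) (hreach : Relation.TransGen E u v) :
    {x | E v x} ⊆ {x | E u x} ∧ {x | E x u} ⊆ {x | E x v} := by
  obtain ⟨b, hub, hbv⟩ := (hreach.shortcut_of_bitransitive hbip hN2).2 hcol
  exact ⟨fun x hvx => hN2 u b v x hub hbv hvx, fun x hxu => hN2 x u b v hxu hub hbv⟩

theorem stmt_18 {V : Type*} (E : V → V → Prop)
    (hirr : ∀ u, ¬ E u u)
    (hout : ∀ u, ∃ v, E u v)
    (σ : V → Bool) (hbip : ∀ u v, E u v → σ u ≠ σ v)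
    (hN2 : ∀ u a b c, E u a → E a b → E b c → E u c)
    (u v : V) (hcol : σ u = σ v) (hreach : Relation.TransGen E u v) :
    {x | E v x} ⊆ {x | E u x} ∧ {x | E x u} ⊆ {x | E x v} :=
  stmt_18_general E σ hbip hN2 u v hcol hreach
end

section
/- Assume additionally that E satisfies property N(2). Let u and v be vertices of the same color (σ u = σ v) that lie on a common closed directed walk, i.e. Relation.TransGen E u v and Relation.TransGen E v u. Then u and v are equivalent: N(u) = N(v) and N⁻(u) = N⁻(v). -/
/-!
Colours alternate along a walk. By N(2) a walk of odd length can be shortened two edges at a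
time down to a single edge, so a walk between vertices of different colours yields an edge
between them, while a walk of even length from `a` to `b` (an edge followed by an odd walk)
gives `N(b) ⊆ N(a)`. On a closed walk through `u` and `v` of equal colour, the two halves
give both inclusions of out-neighbourhoods, and prefixing either half with an edge `x → u`
gives an odd walk `x → v`, hence an edge.
-/

section Bitransitive

variable {V : Type*} {E : V → V → Prop} {σ : V → Bool}

theorem transGen_adj_or_outNbhd_subset (hbip : ∀ u v, E u v → σ u ≠ σ v)
    (hN2 : ∀ u a b c, E u a → E a b → E b c → E u c) {a b : V}
    (hab : Relation.TransGen E a b) :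
    (σ a ≠ σ b ∧ E a b) ∨ (σ a = σ b ∧ {x | E b x} ⊆ {x | E a x}) := by
  induction hab with
  | single hab => exact Or.inl ⟨hbip _ _ hab, hab⟩
  | @tail b c _ hbc ih =>
    have hσbc := hbip _ _ hbc
    rcases ih with ⟨hσab, hab⟩ | ⟨hσab, hsub⟩
    · exact Or.inr ⟨by revert hσab hσbc; cases σ a <;> cases σ b <;> cases σ c <;> decide,
        fun x hcx => hN2 _ _ _ _ hab hbc hcx⟩
    · exact Or.inl ⟨hσab ▸ hσbc, hsub hbc⟩

theorem adj_of_transGen_of_color_ne (hbip : ∀ u v, E u v → σ u ≠ σ v)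
    (hN2 : ∀ u a b c, E u a → E a b → E b c → E u c) {a b : V}
    (hab : Relation.TransGen E a b) (hσ : σ a ≠ σ b) : E a b :=
  ((transGen_adj_or_outNbhd_subset hbip hN2 hab).resolve_right fun h => hσ h.1).2

theorem outNbhd_subset_of_transGen_of_color_eq (hbip : ∀ u v, E u v → σ u ≠ σ v)
    (hN2 : ∀ u a b c, E u a → E a b → E b c → E u c) {a b : V}
    (hab : Relation.TransGen E a b) (hσ : σ a = σ b) : {x | E b x} ⊆ {x | E a x} :=
  ((transGen_adj_or_outNbhd_subset hbip hN2 hab).resolve_left fun h => h.1 hσ).2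

theorem inNbhd_subset_of_transGen_of_color_eq (hbip : ∀ u v, E u v → σ u ≠ σ v)
    (hN2 : ∀ u a b c, E u a → E a b → E b c → E u c) {a b : V}
    (hab : Relation.TransGen E a b) (hσ : σ a = σ b) : {x | E x a} ⊆ {x | E x b} :=
  fun _ hxa => adj_of_transGen_of_color_ne hbip hN2 (.head hxa hab) (hσ ▸ hbip _ _ hxa)

end Bitransitive

theorem stmt_19_general {V : Type*} (E : V → V → Prop)
    (σ : V → Bool) (hbip : ∀ u v, E u v → σ u ≠ σ v)
    (hN2 : ∀ u a b c, E u a → E a b → E b c → E u c)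
    (u v : V) (hcol : σ u = σ v)
    (huv : Relation.TransGen E u v) (hvu : Relation.TransGen E v u) :
    {x | E u x} = {x | E v x} ∧ {x | E x u} = {x | E x v} :=
  ⟨(outNbhd_subset_of_transGen_of_color_eq hbip hN2 hvu hcol.symm).antisymm
      (outNbhd_subset_of_transGen_of_color_eq hbip hN2 huv hcol),
    (inNbhd_subset_of_transGen_of_color_eq hbip hN2 huv hcol).antisymm
      (inNbhd_subset_of_transGen_of_color_eq hbip hN2 hvu hcol.symm)⟩

theorem stmt_19 {V : Type*} (E : V → V → Prop)
    (hirr : ∀ u, ¬ E u u)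
    (hout : ∀ u, ∃ v, E u v)
    (σ : V → Bool) (hbip : ∀ u v, E u v → σ u ≠ σ v)
    (hN2 : ∀ u a b c, E u a → E a b → E b c → E u c)
    (u v : V) (hcol : σ u = σ v)
    (huv : Relation.TransGen E u v) (hvu : Relation.TransGen E v u) :
    {x | E u x} = {x | E v x} ∧ {x | E x u} = {x | E x v} :=
  stmt_19_general E σ hbip hN2 u v hcol huv hvu
end
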